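/- Fix p ∈ (0,1), q = 1 − p, and a static environment η : ℤ → {0,1}. For every nearest-neighbor path ω = (ω_0, …, ω_n) in ℤ with ω_0 < ω_n, the path weights satisfy the reversal identity P^η(Θω) · Π_{i=ω_0}^{ω_n−1} r(i, i+1) = P^η(ω) · Π_{i=ω_0}^{ω_n−1} r(i+1, i), where Θω = (ω_n, …, ω_0) is the time-reversed path. -/

import Mathlib

/-! The walk is reversible. For the potential `π` with `π (x + 1) / π x = r(x, x+1) / r(x+1, x)`,
detailed balance `π x * r(x, y) = π y * r(y, x)` holds for neighbours `x, y`, so step by step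
`π(ω_0) P^η(ω) = π(ω_n) P^η(Θω)`. On the straight path from `ω_0` to `ω_n` the same identity reads
`π(ω_0) ∏ r(i, i+1) = π(ω_n) ∏ r(i+1, i)`, and dividing the two eliminates `π`. -/

open Finset

/-- `ω` is a nearest-neighbor path of length `n` in `ℤ` (only the first `n` steps matter). -/
def IsNNPath (n : ℕ) (ω : ℕ → ℤ) : Prop :=
  ∀ k < n, ω (k + 1) - ω k = 1 ∨ ω (k + 1) - ω k = -1

/-- The one-step transition probability in the static environment `η`:
`r(y, y+1) = p·η(y) + q·(1−η(y))` and `r(y, y−1) = q·η(y) + p·(1−η(y))`, `q = 1 − p`. -/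
noncomputable def staticRate (p : ℝ) (η : ℤ → Bool) (y z : ℤ) : ℝ :=
  if z = y + 1 then (if η y then p else 1 - p) else (if η y then 1 - p else p)

/-- The weight `P^η(ω) = Π_{k<n} r(ω_k, ω_{k+1})` of the path `(ω_0, …, ω_n)`. -/
noncomputable def pathWeight (p : ℝ) (η : ℤ → Bool) (n : ℕ) (ω : ℕ → ℤ) : ℝ :=
  ∏ k ∈ Finset.range n, staticRate p η (ω k) (ω (k + 1))


section DetailedBalance

variable {α M : Type*} [CommMonoid M]

theorem mul_prod_path_eq_mul_prod_path_reverse {adj : α → α → Prop} {π : α → M}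
    {r : α → α → M} (hbal : ∀ x y, adj x y → π x * r x y = π y * r y x)
    {n : ℕ} {ω : ℕ → α} (hω : ∀ k < n, adj (ω k) (ω (k + 1))) :
    π (ω 0) * ∏ k ∈ range n, r (ω k) (ω (k + 1))
      = π (ω n) * ∏ k ∈ range n, r (ω (k + 1)) (ω k) := by
  induction n with
  | zero => simp
  | succ n ih =>
    have hstep := hbal _ _ (hω n n.lt_succ_self)
    calc π (ω 0) * ∏ k ∈ range (n + 1), r (ω k) (ω (k + 1))
        = (π (ω 0) * ∏ k ∈ range n, r (ω k) (ω (k + 1))) * r (ω n) (ω (n + 1)) := by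
          rw [prod_range_succ, mul_assoc]
      _ = (∏ k ∈ range n, r (ω (k + 1)) (ω k)) * (π (ω n) * r (ω n) (ω (n + 1))) := by
          rw [ih fun k hk => hω k (hk.trans n.lt_succ_self)]; ac_rfl
      _ = π (ω (n + 1)) * ∏ k ∈ range (n + 1), r (ω (k + 1)) (ω k) := by
          rw [hstep, prod_range_succ]; ac_rfl

theorem balance_of_adjacent {π : ℤ → M} {r : ℤ → ℤ → M}
    (hbal : ∀ x, π x * r x (x + 1) = π (x + 1) * r (x + 1) x) {x y : ℤ}
    (hxy : y - x = 1 ∨ y - x = -1) : π x * r x y = π y * r y x := by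
  rcases hxy with hxy | hxy
  · obtain rfl : y = x + 1 := by omega
    exact hbal x
  · obtain rfl : x = y + 1 := by omega
    exact (hbal y).symm

theorem mul_prod_Ico_eq_mul_prod_Ico_of_balance {π u d : ℤ → M}
    (hbal : ∀ x, π x * u x = π (x + 1) * d x) {a b : ℤ} (hab : a ≤ b) :
    π a * ∏ i ∈ Ico a b, u i = π b * ∏ i ∈ Ico a b, d i := by
  induction b, hab using Int.leInduction with
  | base => simp
  | succ b hab ih =>
    rw [← prod_Ico_mul_eq_prod_Ico_add_one hab, ← prod_Ico_mul_eq_prod_Ico_add_one hab,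
      ← mul_assoc, ih, mul_right_comm, hbal, mul_right_comm, mul_assoc]

end DetailedBalance

section Potential

variable {G : Type*} [CommGroupWithZero G]

noncomputable def potential (c : ℤ → G) (x : ℤ) : G :=
  (∏ i ∈ Ico 0 x, c i) / ∏ i ∈ Ico x 0, c i

theorem potential_add_one {c : ℤ → G} (hc : ∀ i, c i ≠ 0) (x : ℤ) :
    potential c (x + 1) = potential c x * c x := by
  unfold potential
  rcases le_or_gt 0 x with hx | hx
  · have h₀ : Ico x 0 = ∅ := Ico_eq_empty_of_le hx
    have h₁ : Ico (x + 1) 0 = ∅ := Ico_eq_empty_of_le (by omega)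
    rw [← prod_Ico_mul_eq_prod_Ico_add_one hx, h₀, h₁, prod_empty, div_one, div_one]
  · have h₀ : Ico 0 x = ∅ := Ico_eq_empty_of_le hx.le
    have h₁ : Ico 0 (x + 1) = ∅ := Ico_eq_empty_of_le (by omega)
    rw [← insert_Ico_add_one_left_eq_Ico hx, prod_insert (by simp), h₀, h₁, prod_empty,
      one_div, one_div, mul_inv, mul_right_comm, inv_mul_cancel₀ (hc x), one_mul]

theorem potential_ne_zero {c : ℤ → G} (hc : ∀ i, c i ≠ 0) (x : ℤ) : potential c x ≠ 0 :=
  div_ne_zero (prod_ne_zero_iff.2 fun i _ => hc i) (prod_ne_zero_iff.2 fun i _ => hc i)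

theorem potential_div_mul_eq {u d : ℤ → G} (hu : ∀ i, u i ≠ 0) (hd : ∀ i, d i ≠ 0) (x : ℤ) :
    potential (fun i => u i / d i) x * u x = potential (fun i => u i / d i) (x + 1) * d x := by
  rw [potential_add_one (fun i => div_ne_zero (hu i) (hd i)), mul_assoc, div_mul_cancel₀ _ (hd x)]

end Potential

theorem staticRate_pos {p : ℝ} (hp0 : 0 < p) (hp1 : p < 1) (η : ℤ → Bool) (y z : ℤ) :
    0 < staticRate p η y z := by
  unfold staticRate; split_ifs <;> linarith

theorem pathWeight_reverse (p : ℝ) (η : ℤ → Bool) (n : ℕ) (ω : ℕ → ℤ) :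
    pathWeight p η n (fun k => ω (n - k))
      = ∏ k ∈ range n, staticRate p η (ω (k + 1)) (ω k) := by
  rw [pathWeight, ← prod_range_reflect]
  refine prod_congr rfl fun k hk => ?_
  have hk : k < n := mem_range.1 hk
  congr 2 <;> omega

/-- Reversal identity for path weights in a static environment:
`P^η(Θω) · Π_{i=ω_0}^{ω_n−1} r(i, i+1) = P^η(ω) · Π_{i=ω_0}^{ω_n−1} r(i+1, i)`. -/
theorem pathWeight_reversal (p : ℝ) (hp0 : 0 < p) (hp1 : p < 1) (η : ℤ → Bool)
    (n : ℕ) (ω : ℕ → ℤ) (hω : IsNNPath n ω) (h : ω 0 < ω n) :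
    pathWeight p η n (fun k => ω (n - k)) * ∏ i ∈ Finset.Ico (ω 0) (ω n), staticRate p η i (i + 1)
      = pathWeight p η n ω * ∏ i ∈ Finset.Ico (ω 0) (ω n), staticRate p η (i + 1) i := by
  set r := staticRate p η
  have hr : ∀ y z, r y z ≠ 0 := fun y z => (staticRate_pos hp0 hp1 η y z).ne'
  set π := potential fun i => r i (i + 1) / r (i + 1) i
  have hbal : ∀ x, π x * r x (x + 1) = π (x + 1) * r (x + 1) x :=
    potential_div_mul_eq (fun i => hr i (i + 1)) (fun i => hr (i + 1) i)
  have hpath : π (ω 0) * pathWeight p η n ω = π (ω n) * pathWeight p η n (fun k => ω (n - k)) := by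
    rw [pathWeight_reverse]
    exact mul_prod_path_eq_mul_prod_path_reverse (adj := fun x y => y - x = 1 ∨ y - x = -1)
      (fun _ _ => balance_of_adjacent hbal) hω
  have hends := mul_prod_Ico_eq_mul_prod_Ico_of_balance hbal h.le
  have hπ : ∀ x, π x ≠ 0 := potential_ne_zero fun i => div_ne_zero (hr _ _) (hr _ _)
  apply mul_right_cancel₀ (mul_ne_zero (hπ (ω 0)) (hπ (ω n)))
  linear_combination (π (ω 0) * pathWeight p η n ω) * hends
    - (π (ω 0) * ∏ i ∈ Ico (ω 0) (ω n), r i (i + 1)) * hpath
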